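/- Fast multiplication identity: for B = toep(a) + J toep(Ja) of size n×n diagonalized by DCT-I with first column b, and D_1 = diag(2, 1, ..., 1, 2), one has Bx = √((n−1)/2) · C^T[(C^T b) ∘ (C^T D_1 x)] for all x ∈ ℝⁿ, where ∘ is the entrywise product and C = C_n is the DCT-I matrix, using C = D_1^{-1} C^T D_1 and D_1^{-1}Σ = √((n−1)/2) diag(C^T b) with Σ = C^T B C. -/

import Mathlib

/-!
Write `V = (cos (π j k / N))` and `W = diag(1, 2, …, 2, 1)` with `N = n - 1`, so that
`C = (2N)^{-1/2} W V` and `D₁ = 2 W⁻¹`. Summing the telescoping identity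
`sin (θ/2) (cos jθ + cos (j+1)θ) = cos (θ/2) (sin (j+1)θ - sin jθ)` gives the DCT-I orthogonality
`V W V = 2N W⁻¹`. Hence `V` is invertible, and `a` restricted to `0, …, N` is the restriction of a
cosine polynomial `F x = ∑ₚ cₚ cos (π p x / N)`. As `F` is even and `F (2N - x) = F x`,
`B k l = F (k - l) + F (k + l) = ∑ₚ 2 cₚ cos (π k p / N) cos (π p l / N)`, i.e. `B = V Γ V` with `Γ`
diagonal. Then `b = V γ` and `Cᵀ b = (2N)^{1/2} W⁻¹ γ`, and orthogonality collapses the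
right-hand side to `B x`.
-/

open Real Matrix Finset

def dctWeight (N j : ℕ) : ℝ := if j = 0 ∨ j = N then 1 else 2

theorem dctWeight_pos (N j : ℕ) : 0 < dctWeight N j := by
  unfold dctWeight
  split_ifs <;> norm_num

theorem sum_range_succ_dctWeight_mul {N : ℕ} (hN : 0 < N) (g : ℕ → ℝ) :
    ∑ j ∈ range (N + 1), dctWeight N j * g j = ∑ j ∈ range N, (g j + g (j + 1)) := by
  obtain ⟨M, rfl⟩ : ∃ M, N = M + 1 := ⟨N - 1, by omega⟩
  have hinterior : ∀ j ∈ range M, dctWeight (M + 1) (j + 1) * g (j + 1) = 2 * g (j + 1) := by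
    intro j hj
    rw [mem_range] at hj
    rw [dctWeight, if_neg (by omega)]
  rw [sum_range_succ, sum_range_succ', sum_congr rfl hinterior, sum_add_distrib,
    sum_range_succ' g M, sum_range_succ (fun j => g (j + 1)) M, ← mul_sum]
  simp only [dctWeight, true_or, or_true, if_true]
  ring

theorem sin_half_mul_sum_range_cos_add_cos (θ : ℝ) (N : ℕ) :
    sin (θ / 2) * ∑ j ∈ range N, (cos (j * θ) + cos ((j + 1) * θ)) = cos (θ / 2) * sin (N * θ) := by
  induction N with
  | zero => simp
  | succ N ih =>
    have step (u h : ℝ) :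
        sin h * (cos (u - h) + cos (u + h)) = cos h * (sin (u + h) - sin (u - h)) := by
      rw [cos_sub, cos_add, sin_add, sin_sub]
      ring
    have key := step (N * θ + θ / 2) (θ / 2)
    rw [show (N : ℝ) * θ + θ / 2 - θ / 2 = N * θ by ring,
      show (N : ℝ) * θ + θ / 2 + θ / 2 = (N + 1) * θ by ring] at key
    rw [sum_range_succ, mul_add, ih, Nat.cast_succ]
    linarith

theorem sum_range_dctWeight_mul_cos {N : ℕ} (hN : 0 < N) (d : ℤ) :
    ∑ j ∈ range (N + 1), dctWeight N j * cos (π * j * d / N) =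
      if 2 * (N : ℤ) ∣ d then 2 * N else 0 := by
  have hN' : (N : ℝ) ≠ 0 := by positivity
  set θ := π * d / N
  have hθ (j : ℕ) : π * j * d / N = j * θ := by ring
  simp only [hθ]
  rw [sum_range_succ_dctWeight_mul hN (fun j => cos (j * θ))]
  split_ifs with hd
  · obtain ⟨m, rfl⟩ := hd
    have hcos (j : ℕ) : cos (j * θ) = 1 := by
      rw [← cos_int_mul_two_pi (j * m)]
      congr 1
      simp only [θ]
      push_cast
      field_simp
    simp only [hcos]
    simp
    ring
  · have hsin : sin (θ / 2) ≠ 0 := by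
      rw [Ne, sin_eq_zero_iff]
      rintro ⟨m, hm⟩
      apply hd
      refine ⟨m, ?_⟩
      have : (d : ℝ) = 2 * N * m := by
        simp only [θ] at hm
        field_simp at hm
        nlinarith [pi_pos]
      exact_mod_cast this
    have hNθ : sin (N * θ) = 0 := by
      rw [show (N : ℝ) * θ = d * π by simp only [θ]; field_simp, sin_int_mul_pi]
    have := sin_half_mul_sum_range_cos_add_cos θ N
    rw [hNθ, mul_zero] at this
    simpa using (mul_eq_zero.mp this).resolve_left hsin

theorem sum_range_dctWeight_mul_cos_mul_cos {N : ℕ} (hN : 0 < N) {k l : ℕ} (hk : k ≤ N)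
    (hl : l ≤ N) :
    ∑ j ∈ range (N + 1), dctWeight N j * (cos (π * j * k / N) * cos (π * j * l / N)) =
      if k = l then 2 * N / dctWeight N k else 0 := by
  have hprod : ∀ j ∈ range (N + 1), dctWeight N j * (cos (π * j * k / N) * cos (π * j * l / N)) =
      (dctWeight N j * cos (π * j * ((k - l : ℤ) : ℝ) / N) +
        dctWeight N j * cos (π * j * ((k + l : ℤ) : ℝ) / N)) / 2 := by
    intro j _
    push_cast
    simp only [mul_sub, mul_add, sub_div, add_div, cos_sub, cos_add]
    ring
  have hsub : 2 * (N : ℤ) ∣ (k - l : ℤ) ↔ k = l := by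
    refine ⟨fun h => ?_, fun h => by simp [h]⟩
    have := Int.eq_zero_of_abs_lt_dvd h (by rw [abs_lt]; omega)
    omega
  have hadd : 2 * (N : ℤ) ∣ (k + l : ℤ) ↔ k = l ∧ (k = 0 ∨ k = N) := by
    constructor
    · rintro ⟨m, hm⟩
      have : 0 ≤ m := by nlinarith
      have : m ≤ 1 := by nlinarith
      interval_cases m <;> omega
    · rintro ⟨rfl, rfl | rfl⟩
      · simp
      · exact ⟨1, by ring⟩
  rw [sum_congr rfl hprod, ← sum_div, sum_add_distrib, sum_range_dctWeight_mul_cos hN,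
    sum_range_dctWeight_mul_cos hN]
  simp only [hsub, hadd, dctWeight]
  by_cases hkl : k = l
  · subst hkl
    by_cases hend : k = 0 ∨ k = N <;> simp [hend]
  · simp [hkl]

noncomputable def dctCos (N : ℕ) : Matrix (Fin (N + 1)) (Fin (N + 1)) ℝ :=
  of fun j k => cos (π * j * k / N)

theorem dctCos_mul_diagonal_mul_dctCos {N : ℕ} (hN : 0 < N) :
    dctCos N * diagonal (fun j : Fin (N + 1) => dctWeight N j) * dctCos N =
      diagonal fun k : Fin (N + 1) => 2 * N / dctWeight N k := by
  ext k l
  have horth := sum_range_dctWeight_mul_cos_mul_cos hN k.is_le l.is_le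
  rw [← Fin.sum_univ_eq_sum_range
    (fun j => dctWeight N j * (cos (π * j * k / N) * cos (π * j * l / N)))] at horth
  simp only [Fin.val_inj] at horth
  rw [mul_apply, diagonal_apply, ← horth]
  simp only [mul_diagonal, dctCos, of_apply]
  refine sum_congr rfl fun j _ => ?_
  rw [mul_right_comm π (k : ℝ)]
  ring

theorem dctCos_mulVec_surjective {N : ℕ} (hN : 0 < N) : Function.Surjective (dctCos N).mulVec := by
  rw [mulVec_surjective_iff_exists_right_inverse]
  refine ⟨diagonal (fun j : Fin (N + 1) => dctWeight N j) * dctCos N *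
    diagonal fun k : Fin (N + 1) => dctWeight N k / (2 * N), ?_⟩
  rw [← Matrix.mul_assoc, ← Matrix.mul_assoc, dctCos_mul_diagonal_mul_dctCos hN,
    diagonal_mul_diagonal, ← diagonal_one]
  congr 1
  ext k
  have := (dctWeight_pos N k).ne'
  have : (N : ℝ) ≠ 0 := by positivity
  field_simp

noncomputable def dct (N : ℕ) : Matrix (Fin (N + 1)) (Fin (N + 1)) ℝ :=
  (√(2 * N))⁻¹ • (diagonal (fun j : Fin (N + 1) => dctWeight N j) * dctCos N)

theorem dctCos_transpose (N : ℕ) : (dctCos N)ᵀ = dctCos N := by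
  ext j k
  simp only [transpose_apply, dctCos, of_apply, mul_right_comm π]

theorem dct_transpose (N : ℕ) :
    (dct N)ᵀ = (√(2 * N))⁻¹ • (dctCos N * diagonal fun j : Fin (N + 1) => dctWeight N j) := by
  rw [dct, transpose_smul, transpose_mul, diagonal_transpose, dctCos_transpose]

noncomputable def cosPoly (N : ℕ) (c : Fin (N + 1) → ℝ) (x : ℝ) : ℝ :=
  ∑ p : Fin (N + 1), cos (π * x * p / N) * c p

section cosPoly

variable {N : ℕ} (c : Fin (N + 1) → ℝ)

theorem dctCos_mulVec_apply (k : Fin (N + 1)) : (dctCos N *ᵥ c) k = cosPoly N c k := rfl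

theorem cosPoly_neg (x : ℝ) : cosPoly N c (-x) = cosPoly N c x := by
  simp only [cosPoly, mul_neg, neg_mul, neg_div, cos_neg]

theorem cosPoly_abs (x : ℝ) : cosPoly N c |x| = cosPoly N c x := by
  rcases abs_choice x with h | h <;> rw [h]
  exact cosPoly_neg c x

theorem cosPoly_two_mul_sub (hN : 0 < N) (x : ℝ) : cosPoly N c (2 * N - x) = cosPoly N c x := by
  have hN' : (N : ℝ) ≠ 0 := by positivity
  refine sum_congr rfl fun p _ => ?_
  rw [← cos_nat_mul_two_pi_sub (π * x * p / N) p]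
  congr 2
  field_simp

theorem cosPoly_sub_abs_sub (hN : 0 < N) (x : ℝ) : cosPoly N c (N - |N - x|) = cosPoly N c x := by
  rcases abs_choice ((N : ℝ) - x) with h | h <;> rw [h]
  · rw [sub_sub_cancel]
  · rw [show (N : ℝ) - -(N - x) = 2 * N - x by ring, cosPoly_two_mul_sub c hN]

theorem cosPoly_sub_add_cosPoly_add (x y : ℝ) :
    cosPoly N c (x - y) + cosPoly N c (x + y) =
      ∑ p : Fin (N + 1), cos (π * x * p / N) * (2 * c p) * cos (π * p * y / N) := by
  rw [cosPoly, cosPoly, ← sum_add_distrib]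
  refine sum_congr rfl fun p _ => ?_
  have hsub : π * (x - y) * p / N = π * x * p / N - π * p * y / N := by ring
  have hadd : π * (x + y) * p / N = π * x * p / N + π * p * y / N := by ring
  rw [hsub, hadd, cos_sub, cos_add]
  ring

end cosPoly

theorem toeplitz_add_hankel_eq_dctCos_mul_diagonal_mul_dctCos {N : ℕ} (hN : 0 < N) (a : ℕ → ℝ)
    {T T' J : Matrix (Fin (N + 1)) (Fin (N + 1)) ℝ}
    (hT : ∀ k l : Fin (N + 1), T k l = a (((k : ℕ) : ℤ) - ((l : ℕ) : ℤ)).natAbs)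
    (hJ : ∀ k l : Fin (N + 1), J k l = if (k : ℕ) + (l : ℕ) = N then 1 else 0)
    (hT' : ∀ k l : Fin (N + 1), T' k l = a (N - (((k : ℕ) : ℤ) - ((l : ℕ) : ℤ)).natAbs)) :
    ∃ γ, T + J * T' = dctCos N * diagonal γ * dctCos N := by
  obtain ⟨c, hc⟩ := dctCos_mulVec_surjective hN (fun m => a m)
  have ha (m : ℕ) (hm : m ≤ N) : a m = cosPoly N c m := by
    rw [← dctCos_mulVec_apply c ⟨m, by omega⟩, hc]
  have hJT' (k l : Fin (N + 1)) : (J * T') k l = T' k.rev l := by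
    have hrev (i : Fin (N + 1)) : (k : ℕ) + i = N ↔ k.rev = i := by
      rw [Fin.ext_iff, Fin.val_rev]
      omega
    simp only [mul_apply, hJ, hrev, ite_mul, one_mul, zero_mul, sum_ite_eq, mem_univ, if_true]
  refine ⟨fun p => 2 * c p, ?_⟩
  ext k l
  have hk := k.is_le
  have hl := l.is_le
  have htoeplitz : T k l = cosPoly N c (k - l) := by
    rw [hT, ha _ (by omega), Nat.cast_natAbs, Int.cast_abs, cosPoly_abs]
    push_cast
    rfl
  have hhankel : (J * T') k l = cosPoly N c (k + l) := by
    rw [hJT', hT', ha _ (by omega), Nat.cast_sub (by omega), Nat.cast_natAbs, Int.cast_abs,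
      Fin.val_rev]
    push_cast [show k.val ≤ N from hk]
    rw [sub_sub, cosPoly_sub_abs_sub c hN]
  rw [Matrix.add_apply, htoeplitz, hhankel, cosPoly_sub_add_cosPoly_add, mul_apply]
  simp only [mul_diagonal, dctCos, of_apply]

theorem mulVec_mul_mulVec {l m n R : Type*} [Fintype m] [Fintype n] [DecidableEq m] [Semiring R]
    (A : Matrix l m R) (u : m → R) (M : Matrix m n R) (y : n → R) :
    A *ᵥ (fun i => u i * (M *ᵥ y) i) = (A * diagonal u * M) *ᵥ y := by
  rw [← mulVec_mulVec, ← mulVec_mulVec]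
  congr 1
  ext i
  rw [mulVec_diagonal]

theorem dctCos_mul_diagonal_mul_dctCos_mulVec {N : ℕ} (hN : 0 < N) (γ x : Fin (N + 1) → ℝ) :
    (dctCos N * diagonal γ * dctCos N) *ᵥ x =
      √(N / 2) • (dct N)ᵀ *ᵥ fun i => ((dct N)ᵀ *ᵥ (dctCos N *ᵥ γ)) i *
        ((dct N)ᵀ *ᵥ ((diagonal fun j : Fin (N + 1) => 2 / dctWeight N j) *ᵥ x)) i := by
  rw [dct_transpose]
  have hs2 : √(2 * N) = 2 * √(N / 2) := by
    rw [show (2 : ℝ) * N = 2 ^ 2 * (N / 2) by ring, sqrt_mul (by positivity), sqrt_sq (by norm_num)]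
  set s := √(2 * N)
  set V := dctCos N
  set Ct := s⁻¹ • (V * diagonal fun j : Fin (N + 1) => dctWeight N j)
  have hw (j : Fin (N + 1)) : dctWeight N j ≠ 0 := (dctWeight_pos N j).ne'
  have hs : s ^ 2 = 2 * N := sq_sqrt (by positivity)
  have hspec : Ct *ᵥ (V *ᵥ γ) = fun i => 2 * N / s * (γ i / dctWeight N i) := by
    rw [mulVec_mulVec, Matrix.smul_mul, dctCos_mul_diagonal_mul_dctCos hN, smul_mulVec]
    ext i
    simp only [mulVec_diagonal, Pi.smul_apply, smul_eq_mul]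
    ring
  have hleft : Ct * diagonal (Ct *ᵥ (V *ᵥ γ)) = (2 * N / s ^ 2) • (V * diagonal γ) := by
    ext i j
    simp only [hspec, Ct, mul_diagonal, Matrix.smul_apply, smul_eq_mul]
    field_simp [hw j]
  have hright : Ct * diagonal (fun j : Fin (N + 1) => 2 / dctWeight N j) = (2 / s) • V := by
    ext i j
    simp only [Ct, mul_diagonal, Matrix.smul_apply, smul_eq_mul]
    field_simp [hw j]
  suffices h : √(N / 2) • (Ct * diagonal (Ct *ᵥ (V *ᵥ γ)) *
      (Ct * diagonal fun j : Fin (N + 1) => 2 / dctWeight N j)) = V * diagonal γ * V by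
    rw [mulVec_mul_mulVec, mulVec_mulVec x, ← smul_mulVec, Matrix.mul_assoc (Ct * diagonal _) Ct, h]
  rw [hleft, hright, smul_mul_smul_comm, smul_smul]
  convert one_smul ℝ (V * diagonal γ * V)
  rw [hs2] at hs ⊢
  field_simp
  linarith

/-- Fast DCT-I based multiplication for `B = toep(a) + J·toep(Ja)` with first column `b`
and `D₁ = diag(2, 1, …, 1, 2)`:
`Bx = √((n−1)/2) · Cᵀ[(Cᵀb) ∘ (CᵀD₁x)]` for all `x ∈ ℝⁿ`. -/
theorem fast_toeplitz_hankel_multiplication (n : ℕ) (hn : 2 ≤ n) (a : ℕ → ℝ)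
    (C T T' J B D1 : Matrix (Fin n) (Fin n) ℝ)
    (hC : ∀ k l : Fin n, C k l =
      (if (k : ℕ) = 0 ∨ (k : ℕ) = n - 1 then 1 else 2) / Real.sqrt (2 * n - 2) *
        Real.cos (Real.pi * k * l / (n - 1)))
    (hT : ∀ k l : Fin n, T k l = a (((k : ℕ) : ℤ) - ((l : ℕ) : ℤ)).natAbs)
    (hJ : ∀ k l : Fin n, J k l = if (k : ℕ) + (l : ℕ) = n - 1 then 1 else 0)
    (hT' : ∀ k l : Fin n, T' k l = a (n - 1 - (((k : ℕ) : ℤ) - ((l : ℕ) : ℤ)).natAbs))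
    (hB : B = T + J * T')
    (hD1 : D1 = Matrix.diagonal
      (fun k : Fin n => if (k : ℕ) = 0 ∨ (k : ℕ) = n - 1 then 2 else 1))
    (b : Fin n → ℝ) (hb : ∀ k : Fin n, b k = B k ⟨0, by omega⟩)
    (x : Fin n → ℝ) :
    B.mulVec x = Real.sqrt ((n - 1) / 2) •
      Cᵀ.mulVec (fun i => Cᵀ.mulVec b i * Cᵀ.mulVec (D1.mulVec x) i) := by
  obtain ⟨N, rfl⟩ : ∃ N, n = N + 1 := ⟨n - 1, by omega⟩
  have hN : 0 < N := by omega
  have hcast : ((N + 1 : ℕ) : ℝ) - 1 = N := by push_cast; ring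
  simp only [add_tsub_cancel_right] at hC hJ hT' hD1
  obtain ⟨γ, hγ⟩ := toeplitz_add_hankel_eq_dctCos_mul_diagonal_mul_dctCos hN a hT hJ hT'
  rw [← hB] at hγ
  have hbγ : b = dctCos N *ᵥ γ := by
    ext k
    rw [hb, hγ, mul_apply]
    simp [mul_diagonal, dctCos, mulVec, dotProduct]
  have hCdct : C = dct N := by
    ext k l
    rw [hC, hcast, show 2 * ((N + 1 : ℕ) : ℝ) - 2 = 2 * N by push_cast; ring]
    simp only [dct, Matrix.smul_apply, diagonal_mul, dctCos, of_apply, dctWeight, smul_eq_mul]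
    ring
  have hD1' : D1 = diagonal fun j : Fin (N + 1) => 2 / dctWeight N j := by
    rw [hD1]
    congr 1
    ext j
    unfold dctWeight
    split_ifs <;> norm_num
  rw [hcast, hbγ, hCdct, hD1', hγ]
  exact dctCos_mul_diagonal_mul_dctCos_mulVec hN γ x
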